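/- Let V be a complex Hilbert space, B a bounded, modulus-coercive sesquilinear form on V with bound C_B and coercivity constant α, π : V → V a continuous linear projection with range V_H and kernel W, K : V_H → W the ideal corrector, and F a continuous antilinear functional on V. Let u ∈ V solve B(u, v) = F(v) for all v ∈ V and let G(F) ∈ W be the Green's corrector. Let K_m : V_H → W be a continuous linear map with ‖K(v_H) − K_m(v_H)‖ ≤ ε‖v_H‖ for all v_H ∈ V_H, and let g_m ∈ V satisfy ‖g_m − G(F)‖ ≤ δ. Then there exists a unique u_{H,m}^corr ∈ V_H solving B((I + K_m)(u_{H,m}^corr), (I + K_m)(v)) = F((I + K_m)(v)) − B(g_m, (I + K_m)(v)) for all v ∈ V_H, and the corrected approximation u^ms := (I + K_m)(u_{H,m}^corr) + g_m satisfies ‖u − u^ms‖ ≤ (C_B/α)(ε‖π u‖ + δ). -/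

import Mathlib

/-!
The exact solution splits as `u = π u + K (π u) + G(F)`, since the difference lies in `W` and is
`B`-orthogonal to `W`. The trial space `(I + K_m) V_H` is closed and `I + K_m` maps `V_H`
bijectively onto it with inverse `π`, so the corrected equation is a Galerkin problem on a closed
subspace; it is uniquely solvable by a complex Lax–Milgram argument. The error `e = u - u^ms` is
`B`-orthogonal to the trial space and differs from `e₀ = (K - K_m)(π u) + (G(F) - g_m)` by one of
its elements, so `α ‖e‖² ≤ |B(e, e)| = |B(e, e₀)| ≤ C_B ‖e‖ ‖e₀‖`.
-/

open InnerProductSpace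

section Coercive

variable {𝕜 E : Type*} [RCLike 𝕜] [NormedAddCommGroup E] [InnerProductSpace 𝕜 E]

theorem ContinuousLinearMap.mul_norm_le_norm_apply_of_coercive (T : E →L[𝕜] E) {α : ℝ}
    (hT : ∀ v, α * ‖v‖ ^ 2 ≤ ‖⟪v, T v⟫_𝕜‖) (v : E) : α * ‖v‖ ≤ ‖T v‖ := by
  rcases (norm_nonneg v).eq_or_lt with hv | hv
  · simp [← hv]
  · refine le_of_mul_le_mul_right ?_ hv
    calc α * ‖v‖ * ‖v‖ = α * ‖v‖ ^ 2 := by ring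
      _ ≤ ‖⟪v, T v⟫_𝕜‖ := hT v
      _ ≤ ‖v‖ * ‖T v‖ := norm_inner_le_norm v (T v)
      _ = ‖T v‖ * ‖v‖ := mul_comm _ _

theorem ContinuousLinearMap.surjective_of_coercive [CompleteSpace E] (T : E →L[𝕜] E) {α : ℝ}
    (hα : 0 < α) (hT : ∀ v, α * ‖v‖ ^ 2 ≤ ‖⟪v, T v⟫_𝕜‖) : Function.Surjective T := by
  have hanti : AntilipschitzWith (α⁻¹).toNNReal T := by
    refine T.antilipschitz_of_bound fun v => ?_
    rw [Real.coe_toNNReal _ (inv_nonneg.mpr hα.le), le_inv_mul_iff₀ hα]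
    exact T.mul_norm_le_norm_apply_of_coercive hT v
  have : CompleteSpace T.range :=
    (hanti.isClosed_range T.uniformContinuous).completeSpace_coe
  suffices T.range = ⊤ from LinearMap.range_eq_top.mp this
  rw [← T.range.orthogonal_orthogonal, Submodule.eq_top_iff']
  intro v w hw
  have hTw : ⟪w, T w⟫_𝕜 = 0 := by
    have : ⟪T w, w⟫_𝕜 = 0 := hw _ (LinearMap.mem_range_self _ w)
    rw [← inner_conj_symm, this, map_zero]
  have hw0 : w = 0 := by
    have := hT w
    rw [hTw, norm_zero] at this
    simpa using nonpos_of_mul_nonpos_right this hα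
  rw [hw0, inner_zero_left]

end Coercive

section Sesquilinear

variable {E : Type*} [NormedAddCommGroup E] [InnerProductSpace ℂ E] {α : ℝ}

theorem exists_continuousSesquilinear_apply_eq (B : E → E → ℂ) {C : ℝ} (hC : 0 ≤ C)
    (hadd₁ : ∀ u v w : E, B (u + v) w = B u w + B v w)
    (hsmul₁ : ∀ (c : ℂ) (u w : E), B (c • u) w = c * B u w)
    (hadd₂ : ∀ u v w : E, B u (v + w) = B u v + B u w)
    (hsmul₂ : ∀ (c : ℂ) (u w : E), B u (c • w) = (starRingEnd ℂ) c * B u w)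
    (hbound : ∀ u v : E, ‖B u v‖ ≤ C * ‖u‖ * ‖v‖) :
    ∃ Bc : E →L[ℂ] E →L⋆[ℂ] ℂ, (∀ u v, Bc u v = B u v) ∧ ‖Bc‖ ≤ C :=
  ⟨_, fun _ _ => rfl, LinearMap.mkContinuous₂_norm_le
    (LinearMap.mk₂'ₛₗ (RingHom.id ℂ) (starRingEnd ℂ) B hadd₁ hsmul₁ hadd₂ hsmul₂) hC hbound⟩

theorem eq_zero_of_apply_self_eq_zero (B : E →L[ℂ] E →L⋆[ℂ] ℂ) (hα : 0 < α)
    (hB : ∀ v, α * ‖v‖ ^ 2 ≤ ‖B v v‖) {v : E} (hv : B v v = 0) : v = 0 := by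
  have := hB v
  rw [hv, norm_zero] at this
  simpa using nonpos_of_mul_nonpos_right this hα

theorem exists_apply_eq_of_coercive [CompleteSpace E] (B : E →L[ℂ] E →L⋆[ℂ] ℂ) (hα : 0 < α)
    (hB : ∀ v, α * ‖v‖ ^ 2 ≤ ‖B v v‖) (L : E →L⋆[ℂ] ℂ) : ∃ z, B z = L := by
  set T := (continuousLinearMapOfBilin B.flip).adjoint
  have hT : ∀ y z, ⟪y, T z⟫_ℂ = B z y := fun y z => by
    rw [ContinuousLinearMap.adjoint_inner_right, continuousLinearMapOfBilin_apply]; rfl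
  obtain ⟨w, hw⟩ : ∃ w : E, ∀ y, ⟪y, w⟫_ℂ = L y := by
    refine ⟨(toDual ℂ E).symm (((starL ℂ : ℂ ≃L⋆[ℂ] ℂ) : ℂ →L⋆[ℂ] ℂ).comp L), fun y => ?_⟩
    rw [← inner_conj_symm, toDual_symm_apply]
    simp
  obtain ⟨z, rfl⟩ := T.surjective_of_coercive hα (fun v => hT v v ▸ hB v) w
  exact ⟨z, ContinuousLinearMap.ext fun y => (hT y z).symm.trans (hw y)⟩

theorem existsUnique_mem_forall_mem_apply_eq (B : E →L[ℂ] E →L⋆[ℂ] ℂ) (hα : 0 < α)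
    (hB : ∀ v, α * ‖v‖ ^ 2 ≤ ‖B v v‖) (S : Submodule ℂ E) [CompleteSpace S]
    (L : E →L⋆[ℂ] ℂ) : ∃! z, z ∈ S ∧ ∀ y ∈ S, B z y = L y := by
  obtain ⟨z, hz⟩ := exists_apply_eq_of_coercive (B.bilinearComp S.subtypeL S.subtypeL) hα
    (fun v => hB v) (L.comp S.subtypeL)
  refine ⟨z, ⟨z.2, fun y hy => congrArg (· ⟨y, hy⟩) hz⟩, ?_⟩
  rintro z' ⟨hz'S, hz'⟩
  have hd : z' - z ∈ S := S.sub_mem hz'S z.2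
  refine sub_eq_zero.mp (eq_zero_of_apply_self_eq_zero B hα hB ?_)
  rw [map_sub B, sub_apply, hz' _ hd,
    show B z (z' - z) = L (z' - z) from congrArg (· ⟨_, hd⟩) hz, sub_self]

theorem norm_le_of_apply_sub_eq_zero (B : E →L[ℂ] E →L⋆[ℂ] ℂ) (hα : 0 < α)
    (hB : ∀ v, α * ‖v‖ ^ 2 ≤ ‖B v v‖) {e e₀ : E} (he : B e (e - e₀) = 0) :
    ‖e‖ ≤ ‖B‖ / α * ‖e₀‖ := by
  rw [map_sub, sub_eq_zero] at he
  rcases (norm_nonneg e).eq_or_lt with he0 | he0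
  · rw [← he0]; positivity
  rw [div_mul_eq_mul_div, le_div_iff₀ hα]
  refine le_of_mul_le_mul_right ?_ he0
  calc ‖e‖ * α * ‖e‖ = α * ‖e‖ ^ 2 := by ring
    _ ≤ ‖B e e₀‖ := he ▸ hB e
    _ ≤ ‖B‖ * ‖e‖ * ‖e₀‖ := B.le_opNorm₂ e e₀
    _ = ‖B‖ * ‖e₀‖ * ‖e‖ := by ring

end Sesquilinear

section Corrector

variable {V : Type*} [NormedAddCommGroup V] [InnerProductSpace ℂ V]

/-- The trial space `(I + K_m) V_H`, written as a kernel so that it is visibly closed. -/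
def correctedSpace (π Km : V →L[ℂ] V) : Submodule ℂ V :=
  ((ContinuousLinearMap.id ℂ V + Km) ∘L π - ContinuousLinearMap.id ℂ V).ker

variable {π Km : V →L[ℂ] V}

theorem mem_correctedSpace {s : V} : s ∈ correctedSpace π Km ↔ π s + Km (π s) = s := by
  simp [correctedSpace, sub_eq_zero]

theorem isClosed_correctedSpace : IsClosed (correctedSpace π Km : Set V) :=
  ContinuousLinearMap.isClosed_ker _

theorem apply_add_apply_eq_self (hπ : ∀ v : V, π (π v) = π v)
    (hKm₀ : ∀ vH ∈ Set.range π, π (Km vH) = 0) {v : V} (hv : v ∈ Set.range π) :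
    π (v + Km v) = v := by
  obtain ⟨x, rfl⟩ := hv
  rw [map_add, hπ, hKm₀ _ ⟨x, rfl⟩, add_zero]

theorem add_apply_mem_correctedSpace (hπ : ∀ v : V, π (π v) = π v)
    (hKm₀ : ∀ vH ∈ Set.range π, π (Km vH) = 0) {v : V} (hv : v ∈ Set.range π) :
    v + Km v ∈ correctedSpace π Km := by
  rw [mem_correctedSpace, apply_add_apply_eq_self hπ hKm₀ hv]

theorem forall_mem_correctedSpace_iff (hπ : ∀ v : V, π (π v) = π v)
    (hKm₀ : ∀ vH ∈ Set.range π, π (Km vH) = 0) {P : V → Prop} :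
    (∀ s ∈ correctedSpace π Km, P s) ↔ ∀ v ∈ Set.range π, P (v + Km v) := by
  refine ⟨fun h v hv => h _ (add_apply_mem_correctedSpace hπ hKm₀ hv), fun h s hs => ?_⟩
  rw [← mem_correctedSpace.mp hs]
  exact h _ ⟨s, rfl⟩

theorem existsUnique_mem_range_of_correctedSpace (hπ : ∀ v : V, π (π v) = π v)
    (hKm₀ : ∀ vH ∈ Set.range π, π (Km vH) = 0) {P : V → Prop}
    (h : ∃! z, z ∈ correctedSpace π Km ∧ P z) :
    ∃! v, v ∈ Set.range π ∧ P (v + Km v) := by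
  obtain ⟨z, ⟨hzS, hz⟩, huniq⟩ := h
  refine ⟨π z, ⟨⟨z, rfl⟩, (mem_correctedSpace.mp hzS).symm ▸ hz⟩, ?_⟩
  rintro v ⟨hv, hPv⟩
  rw [← huniq _ ⟨add_apply_mem_correctedSpace hπ hKm₀ hv, hPv⟩,
    apply_add_apply_eq_self hπ hKm₀ hv]

theorem sub_sub_mem_correctedSpace (hπ : ∀ v : V, π (π v) = π v)
    (hKm₀ : ∀ vH ∈ Set.range π, π (Km vH) = 0) {u k g uc gm : V} (hu : u = π u + k + g)
    (huc : uc ∈ Set.range π) :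
    u - (uc + Km uc + gm) - (k - Km (π u) + (g - gm)) ∈ correctedSpace π Km := by
  obtain ⟨x, rfl⟩ := huc
  convert add_apply_mem_correctedSpace hπ hKm₀ ⟨u - x, map_sub π u x⟩ using 1
  nth_rewrite 1 [hu]
  rw [map_sub]
  abel

theorem eq_proj_add_corrector_add_green (B : V →L[ℂ] V →L⋆[ℂ] ℂ) {α : ℝ} (hα : 0 < α)
    (hB : ∀ v, α * ‖v‖ ^ 2 ≤ ‖B v v‖) (hπ : ∀ v : V, π (π v) = π v)
    {u k g : V} (hk₀ : π k = 0) (hk : ∀ w, π w = 0 → B k w = -B (π u) w)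
    (hg₀ : π g = 0) (hg : ∀ w, π w = 0 → B g w = B u w) : u = π u + k + g := by
  have hd : π (u - (π u + k + g)) = 0 := by simp [hπ, hk₀, hg₀]
  refine sub_eq_zero.mp (eq_zero_of_apply_self_eq_zero B hα hB ?_)
  simp only [map_sub B, map_add B, sub_apply, add_apply, hk _ hd, hg _ hd]
  ring

end Corrector

theorem localized_source_corrected_method_error_estimate_general
    {V : Type*} [NormedAddCommGroup V] [InnerProductSpace ℂ V] [CompleteSpace V]
    (B : V → V → ℂ) (C_B α : ℝ) (hC_B : 0 < C_B) (hα : 0 < α)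
    (hadd₁ : ∀ u v w : V, B (u + v) w = B u w + B v w)
    (hsmul₁ : ∀ (c : ℂ) (u w : V), B (c • u) w = c * B u w)
    (hadd₂ : ∀ u v w : V, B u (v + w) = B u v + B u w)
    (hsmul₂ : ∀ (c : ℂ) (u w : V), B u (c • w) = (starRingEnd ℂ) c * B u w)
    (hbound : ∀ u v : V, ‖B u v‖ ≤ C_B * ‖u‖ * ‖v‖)
    (hcoer : ∀ v : V, α * ‖v‖ ^ 2 ≤ ‖B v v‖)
    (π : V →L[ℂ] V) (hπ : ∀ v : V, π (π v) = π v)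
    (K : V → V)
    (hK₀ : ∀ vH ∈ Set.range π, π (K vH) = 0)
    (hK : ∀ vH ∈ Set.range π, ∀ w : V, π w = 0 → B (K vH) w = -(B vH w))
    (F : V →L⋆[ℂ] ℂ)
    (u : V) (hu : ∀ v : V, B u v = F v)
    (gF : V) (hgF₀ : π gF = 0) (hgF : ∀ w : V, π w = 0 → B gF w = F w)
    (Km : V →L[ℂ] V) (hKm₀ : ∀ vH ∈ Set.range π, π (Km vH) = 0)
    (ε : ℝ)
    (happrox : ∀ vH ∈ Set.range π, ‖K vH - Km vH‖ ≤ ε * ‖vH‖)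
    (gm : V) (δ : ℝ) (hgm : ‖gm - gF‖ ≤ δ) :
    (∃! uc : V, uc ∈ Set.range π ∧
        ∀ v ∈ Set.range π,
          B (uc + Km uc) (v + Km v) = F (v + Km v) - B gm (v + Km v)) ∧
      (∀ uc : V,
        (uc ∈ Set.range π ∧
          ∀ v ∈ Set.range π,
            B (uc + Km uc) (v + Km v) = F (v + Km v) - B gm (v + Km v)) →
        ‖u - ((uc + Km uc) + gm)‖ ≤ (C_B / α) * (ε * ‖π u‖ + δ)) := by
  obtain ⟨Bc, hBc, hBc_norm⟩ :=
    exists_continuousSesquilinear_apply_eq B hC_B.le hadd₁ hsmul₁ hadd₂ hsmul₂ hbound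
  simp only [← hBc] at hcoer hK hu hgF ⊢
  set S := correctedSpace π Km
  have : CompleteSpace S := isClosed_correctedSpace.completeSpace_coe
  have hsol : ∀ z, (∀ s ∈ S, Bc z s = F s - Bc gm s) ↔
      ∀ v ∈ Set.range π, Bc z (v + Km v) = F (v + Km v) - Bc gm (v + Km v) :=
    fun z => forall_mem_correctedSpace_iff hπ hKm₀
  refine ⟨?_, fun uc ⟨huc, hsol_uc⟩ => ?_⟩
  · simp only [← hsol]
    exact existsUnique_mem_range_of_correctedSpace hπ hKm₀
      (existsUnique_mem_forall_mem_apply_eq Bc hα hcoer S (F - Bc gm))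
  have hdecomp : u = π u + K (π u) + gF :=
    eq_proj_add_corrector_add_green Bc hα hcoer hπ (hK₀ _ ⟨u, rfl⟩) (hK _ ⟨u, rfl⟩) hgF₀
      fun w hw => (hgF w hw).trans (hu w).symm
  have horth : ∀ s ∈ S, Bc (u - (uc + Km uc + gm)) s = 0 := fun s hs => by
    rw [map_sub Bc, map_add Bc, sub_apply, add_apply, hu, (hsol _).mpr hsol_uc s hs]
    ring
  calc ‖u - (uc + Km uc + gm)‖ ≤ ‖Bc‖ / α * ‖K (π u) - Km (π u) + (gF - gm)‖ :=
        norm_le_of_apply_sub_eq_zero Bc hα hcoer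
          (horth _ (sub_sub_mem_correctedSpace hπ hKm₀ hdecomp huc))
    _ ≤ C_B / α * (ε * ‖π u‖ + δ) := by
        gcongr
        calc _ ≤ ‖K (π u) - Km (π u)‖ + ‖gF - gm‖ := norm_add_le _ _
          _ ≤ ε * ‖π u‖ + δ := add_le_add (happrox _ ⟨u, rfl⟩) (norm_sub_rev gF gm ▸ hgm)

/-- **Error estimate for the localized source-corrected method (abstract form
of Section 3.5).** Let `K` be the ideal corrector, `K_m` a continuous linear
map on `V` mapping `V_H = range π` into `W = ker π` with
`‖K v_H - K_m v_H‖ ≤ ε ‖v_H‖` on `V_H`, and let `g_m` approximate the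
Green's corrector `gF` of `F` with `‖g_m - gF‖ ≤ δ`. Then the localized
source-corrected homogenized equation has a unique solution
`u_{H,m}^corr ∈ V_H`, and the corrected approximation
`u^ms = (I + K_m) u_{H,m}^corr + g_m` satisfies
`‖u - u^ms‖ ≤ (C_B / α) (ε ‖π u‖ + δ)`. -/
theorem localized_source_corrected_method_error_estimate
    {V : Type*} [NormedAddCommGroup V] [InnerProductSpace ℂ V] [CompleteSpace V]
    (B : V → V → ℂ) (C_B α : ℝ) (hC_B : 0 < C_B) (hα : 0 < α)
    (hadd₁ : ∀ u v w : V, B (u + v) w = B u w + B v w)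
    (hsmul₁ : ∀ (c : ℂ) (u w : V), B (c • u) w = c * B u w)
    (hadd₂ : ∀ u v w : V, B u (v + w) = B u v + B u w)
    (hsmul₂ : ∀ (c : ℂ) (u w : V), B u (c • w) = (starRingEnd ℂ) c * B u w)
    (hbound : ∀ u v : V, ‖B u v‖ ≤ C_B * ‖u‖ * ‖v‖)
    (hcoer : ∀ v : V, α * ‖v‖ ^ 2 ≤ ‖B v v‖)
    (π : V →L[ℂ] V) (hπ : ∀ v : V, π (π v) = π v)
    (K : V → V)
    (hK₀ : ∀ vH ∈ Set.range π, π (K vH) = 0)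
    (hK : ∀ vH ∈ Set.range π, ∀ w : V, π w = 0 → B (K vH) w = -(B vH w))
    (F : V →L⋆[ℂ] ℂ)
    (u : V) (hu : ∀ v : V, B u v = F v)
    (gF : V) (hgF₀ : π gF = 0) (hgF : ∀ w : V, π w = 0 → B gF w = F w)
    (Km : V →L[ℂ] V) (hKm₀ : ∀ vH ∈ Set.range π, π (Km vH) = 0)
    (ε : ℝ) (hε : 0 ≤ ε)
    (happrox : ∀ vH ∈ Set.range π, ‖K vH - Km vH‖ ≤ ε * ‖vH‖)
    (gm : V) (δ : ℝ) (hδ : 0 ≤ δ) (hgm : ‖gm - gF‖ ≤ δ) :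
    (∃! uc : V, uc ∈ Set.range π ∧
        ∀ v ∈ Set.range π,
          B (uc + Km uc) (v + Km v) = F (v + Km v) - B gm (v + Km v)) ∧
      (∀ uc : V,
        (uc ∈ Set.range π ∧
          ∀ v ∈ Set.range π,
            B (uc + Km uc) (v + Km v) = F (v + Km v) - B gm (v + Km v)) →
        ‖u - ((uc + Km uc) + gm)‖ ≤ (C_B / α) * (ε * ‖π u‖ + δ)) :=
  localized_source_corrected_method_error_estimate_general B C_B α hC_B hα hadd₁ hsmul₁ hadd₂ hsmul₂
    hbound hcoer π hπ K hK₀ hK F u hu gF hgF₀ hgF Km hKm₀ ε happrox gm δ hgm
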